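/- Let X be an M×M complex matrix and let J(X) be the 2M×2M matrix [[0, X],[X^T, 0]]. Then for every real α > 0, the generating polynomials satisfy F^{(α)}_{J(X)}(t) = (F^{(α)}_X(t))^2 as polynomials in t. -/

import Mathlib

open scoped BigOperators Matrix

/-- The square submatrix of `A` with rows indexed by `I` and columns indexed by `J`
(both in increasing order), as a determinant; it is `0` if `I.card ≠ J.card`. -/
noncomputable def subdetC {N : ℕ} (A : Matrix (Fin N) (Fin N) ℂ) (I J : Finset (Fin N)) : ℂ :=
  if h : J.card = I.card then
    Matrix.det (Matrix.of fun a b : Fin I.card =>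
      A (I.orderEmbOfFin rfl a) (J.orderEmbOfFin h b))
  else 0

/-- `S_r^{(α)}(A) = Σ_{|I|=|J|=r} |det A[I,J]|^α`. -/
noncomputable def SpowC {N : ℕ} (A : Matrix (Fin N) (Fin N) ℂ) (α : ℝ) (r : ℕ) : ℝ :=
  ∑ I ∈ Finset.univ.filter (fun I : Finset (Fin N) => I.card = r),
    ∑ J ∈ Finset.univ.filter (fun J : Finset (Fin N) => J.card = r),
      ‖subdetC A I J‖ ^ α

/-- The generating polynomial `F^{(α)}_A(t) = Σ_{r=0}^{N} S_r^{(α)}(A) t^r`. -/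
noncomputable def genPoly {N : ℕ} (A : Matrix (Fin N) (Fin N) ℂ) (α : ℝ) : Polynomial ℝ :=
  ∑ r ∈ Finset.range (N + 1), Polynomial.C (SpowC A α r) * Polynomial.X ^ r

/-- The `2M × 2M` chiral block matrix `J(X) = [[0, X],[Xᵀ, 0]]`. -/
def Jmat {M : ℕ} (X : Matrix (Fin M) (Fin M) ℂ) :
    Matrix (Fin (2 * M)) (Fin (2 * M)) ℂ :=
  Matrix.reindex (finSumFinEquiv.trans (finCongr (two_mul M).symm))
    (finSumFinEquiv.trans (finCongr (two_mul M).symm))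
    (Matrix.fromBlocks 0 X Xᵀ 0)

/-!
A subset of `Fin (2 * M)` is a pair `(I₁, I₂)` of subsets of the two halves. After reordering rows
and columns, the minor of `J(X)` on rows `(I₁, I₂)` and columns `(J₁, J₂)` is block anti-diagonal
with blocks `X[I₁, J₂]` and `Xᵀ[I₂, J₁]`. If `|I₁| = |J₂|` its determinant is
`± det X[I₁, J₂] · det X[J₁, I₂]`; otherwise it vanishes, since a nonzero term of the Leibniz
expansion would match the rows of `I₁` bijectively with the columns of `J₂`. So
`|det J(X)[I, J]|^α` factors, and, the weight `t^(|I₁| + |I₂|)` factoring as well, `F_{J(X)}`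
splits into two copies of `F_X`.
-/

namespace Matrix

theorem norm_det_submatrix_equiv {m n R : Type*} [Fintype m] [DecidableEq m] [Fintype n]
    [DecidableEq n] [NormedCommRing R] [NormMulClass R] [NormOneClass R] (A : Matrix n n R)
    (e f : m ≃ n) : ‖(A.submatrix e f).det‖ = ‖A.det‖ := by
  have h := det_reindex e.symm f.symm A
  rw [reindex_apply, Equiv.symm_symm, Equiv.symm_symm] at h
  rw [h, norm_mul]
  rcases Int.units_eq_one_or (Equiv.Perm.sign (f.symm.trans e)) with hs | hs <;>
    simp [hs]

theorem det_submatrix_fromBlocks_zero_zero_of_card_ne {m₁ m₂ n₁ n₂ R : Type*} [Fintype m₁]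
    [Fintype m₂] [DecidableEq m₁] [DecidableEq m₂] [Fintype n₂] [CommRing R]
    (B : Matrix m₁ n₂ R) (C : Matrix m₂ n₁ R) (g : m₁ ⊕ m₂ ≃ n₁ ⊕ n₂)
    (h : Fintype.card m₁ ≠ Fintype.card n₂) :
    ((fromBlocks 0 B C 0).submatrix id g).det = 0 := by
  rw [det_apply]
  refine Finset.sum_eq_zero fun σ _ => ?_
  by_cases hσ : ∀ j, (σ j).isLeft ↔ (g j).isRight
  · refine absurd ?_ h
    calc Fintype.card m₁ = Fintype.card {j // (σ j).isLeft} :=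
          Fintype.card_congr (Equiv.sumIsLeft.symm.trans (σ.subtypeEquiv fun _ => Iff.rfl).symm)
      _ = Fintype.card {j // (g j).isRight} := Fintype.card_congr (Equiv.subtypeEquivRight hσ)
      _ = Fintype.card n₂ :=
          Fintype.card_congr ((g.subtypeEquiv fun _ => Iff.rfl).trans Equiv.sumIsRight)
  · obtain ⟨j, hj⟩ := not_forall.mp hσ
    refine smul_eq_zero_of_right _ (Finset.prod_eq_zero (Finset.mem_univ j) ?_)
    rcases hi : σ j with a | a <;> rcases hk : g j with b | b <;> simp_all

theorem norm_det_submatrix_fromBlocks_zero_zero {m₁ m₂ n₁ n₂ R : Type*} [Fintype m₁]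
    [Fintype m₂] [DecidableEq m₁] [DecidableEq m₂] [NormedCommRing R] [NormMulClass R]
    [NormOneClass R] (B : Matrix m₁ n₂ R) (C : Matrix m₂ n₁ R) (g : m₁ ⊕ m₂ ≃ n₁ ⊕ n₂)
    (g₁ : m₁ ≃ n₂) (g₂ : m₂ ≃ n₁) :
    ‖((fromBlocks 0 B C 0).submatrix id g).det‖ =
      ‖(B.submatrix id g₁).det‖ * ‖(C.submatrix id g₂).det‖ := by
  set g' : m₁ ⊕ m₂ ≃ n₁ ⊕ n₂ := (Equiv.sumCongr g₁ g₂).trans (Equiv.sumComm _ _)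
  have hdiag : (fromBlocks 0 B C 0).submatrix id g' =
      fromBlocks (B.submatrix id g₁) 0 0 (C.submatrix id g₂) := by
    ext (a | a) (b | b) <;> rfl
  have hg : (fromBlocks 0 B C 0).submatrix id g =
      ((fromBlocks 0 B C 0).submatrix id g').submatrix (Equiv.refl _) (g.trans g'.symm) := by
    simp [submatrix_submatrix, Function.comp_def]
  rw [hg, norm_det_submatrix_equiv, hdiag, det_fromBlocks_zero₂₁, norm_mul]

end Matrix

open Finset

lemma subdetC_of_card_ne {N : ℕ} (A : Matrix (Fin N) (Fin N) ℂ) {I J : Finset (Fin N)}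
    (h : I.card ≠ J.card) : subdetC A I J = 0 :=
  dif_neg (Ne.symm h)

lemma norm_subdetC_eq_norm_det {N : ℕ} (A : Matrix (Fin N) (Fin N) ℂ) {I J : Finset (Fin N)}
    {ι : Type*} [Fintype ι] [DecidableEq ι] (e : ι ≃ I) (f : ι ≃ J) :
    ‖subdetC A I J‖ = ‖(A.submatrix (fun i => (e i : Fin N)) (fun j => (f j : Fin N))).det‖ := by
  have hJI : J.card = I.card := by
    simpa using (Fintype.card_congr f).symm.trans (Fintype.card_congr e)
  let σ : ι ≃ Fin I.card := e.trans (I.orderIsoOfFin rfl).toEquiv.symm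
  let τ : ι ≃ Fin I.card := f.trans (J.orderIsoOfFin hJI).toEquiv.symm
  have hsub : A.submatrix (fun i => (e i : Fin N)) (fun j => (f j : Fin N)) =
      (Matrix.of fun a b : Fin I.card =>
        A (I.orderEmbOfFin rfl a) (J.orderEmbOfFin hJI b)).submatrix σ τ := by
    ext i j
    simp [σ, τ, ← Finset.coe_orderIsoOfFin_apply]
  rw [subdetC, dif_pos hJI, hsub, Matrix.norm_det_submatrix_equiv]

lemma norm_subdetC_map {N : ℕ} (A : Matrix (Fin N) (Fin N) ℂ) {ι : Type*} [Fintype ι]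
    [DecidableEq ι] (e f : ι ↪ Fin N) :
    ‖subdetC A (univ.map e) (univ.map f)‖ = ‖(A.submatrix e f).det‖ :=
  norm_subdetC_eq_norm_det A ((Equiv.subtypeUnivEquiv mem_univ).symm.trans (univ.equivMap e))
    ((Equiv.subtypeUnivEquiv mem_univ).symm.trans (univ.equivMap f))

def finSumFinEquivTwoMul (M : ℕ) : Fin M ⊕ Fin M ≃ Fin (2 * M) :=
  finSumFinEquiv.trans (finCongr (two_mul M).symm)

def finsetPairEquiv (M : ℕ) : Finset (Fin M) × Finset (Fin M) ≃ Finset (Fin (2 * M)) :=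
  Finset.sumEquiv.toEquiv.symm.trans (finSumFinEquivTwoMul M).finsetCongr

lemma card_finsetPairEquiv {M : ℕ} (p : Finset (Fin M) × Finset (Fin M)) :
    (finsetPairEquiv M p).card = p.1.card + p.2.card := by
  simp [finsetPairEquiv]

def blockEmbedding {M : ℕ} (I J : Finset (Fin M)) : I ⊕ J ↪ Fin (2 * M) :=
  (Function.Embedding.sumMap (.subtype _) (.subtype _)).trans
    (finSumFinEquivTwoMul M).toEmbedding

lemma univ_map_blockEmbedding {M : ℕ} (I J : Finset (Fin M)) :
    univ.map (blockEmbedding I J) = finsetPairEquiv M (I, J) := by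
  rw [blockEmbedding, ← Finset.map_map]
  congr 1
  ext (a | a) <;> simp

lemma Jmat_apply {M : ℕ} (X : Matrix (Fin M) (Fin M) ℂ) (a b : Fin M ⊕ Fin M) :
    Jmat X (finSumFinEquivTwoMul M a) (finSumFinEquivTwoMul M b) =
      Matrix.fromBlocks 0 X Xᵀ 0 a b := by
  change Matrix.reindex (finSumFinEquivTwoMul M) (finSumFinEquivTwoMul M) _ _ _ = _
  simp

lemma Jmat_submatrix_blockEmbedding {M : ℕ} (X : Matrix (Fin M) (Fin M) ℂ)
    (I₁ I₂ J₁ J₂ : Finset (Fin M)) :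
    (Jmat X).submatrix (blockEmbedding I₁ I₂) (blockEmbedding J₁ J₂) =
      Matrix.fromBlocks 0 (X.submatrix (↑) (↑)) (Xᵀ.submatrix (↑) (↑)) 0 := by
  ext (a | a) (b | b) <;> simp [blockEmbedding, Jmat_apply]

lemma norm_subdetC_Jmat {M : ℕ} (X : Matrix (Fin M) (Fin M) ℂ) (I₁ I₂ J₁ J₂ : Finset (Fin M)) :
    ‖subdetC (Jmat X) (finsetPairEquiv M (I₁, I₂)) (finsetPairEquiv M (J₁, J₂))‖ =
      ‖subdetC X I₁ J₂‖ * ‖subdetC X J₁ I₂‖ := by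
  by_cases hcard : I₁.card + I₂.card = J₁.card + J₂.card
  swap
  · rw [subdetC_of_card_ne _ (by simpa [card_finsetPairEquiv] using hcard), norm_zero]
    rcases (by omega : I₁.card ≠ J₂.card ∨ J₁.card ≠ I₂.card) with h | h <;>
      simp [subdetC_of_card_ne _ h]
  -- any ordering `g` of the columns will do: the norm of the determinant does not see it
  obtain ⟨g⟩ : Nonempty (I₁ ⊕ I₂ ≃ J₁ ⊕ J₂) := Fintype.card_eq.mp (by simpa using hcard)
  have hminor :
      ‖subdetC (Jmat X) (finsetPairEquiv M (I₁, I₂)) (finsetPairEquiv M (J₁, J₂))‖ =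
        ‖((Matrix.fromBlocks 0 (X.submatrix (↑) (↑)) (Xᵀ.submatrix (↑) (↑)) 0).submatrix
          id g).det‖ := by
    rw [← univ_map_blockEmbedding, ← univ_map_blockEmbedding, ← map_univ_equiv g, map_map,
      norm_subdetC_map, ← Jmat_submatrix_blockEmbedding]
    rfl
  rw [hminor]
  by_cases h₁ : I₁.card = J₂.card
  · obtain ⟨g₁⟩ : Nonempty (I₁ ≃ J₂) := Fintype.card_eq.mp (by simpa using h₁)
    obtain ⟨g₂⟩ : Nonempty (I₂ ≃ J₁) := Fintype.card_eq.mp (by simp; omega)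
    rw [Matrix.norm_det_submatrix_fromBlocks_zero_zero _ _ g g₁ g₂,
      norm_subdetC_eq_norm_det X (Equiv.refl _) g₁, norm_subdetC_eq_norm_det X g₂ (Equiv.refl _),
      ← Matrix.det_transpose ((Xᵀ.submatrix _ _).submatrix id g₂)]
    rfl
  · rw [Matrix.det_submatrix_fromBlocks_zero_zero_of_card_ne _ _ g (by simpa using h₁),
      subdetC_of_card_ne X h₁]
    simp

lemma norm_subdetC_rpow_of_card_ne {N : ℕ} (A : Matrix (Fin N) (Fin N) ℂ) {α : ℝ} (hα : α ≠ 0)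
    {I J : Finset (Fin N)} (h : I.card ≠ J.card) : ‖subdetC A I J‖ ^ α = 0 := by
  rw [subdetC_of_card_ne A h, norm_zero, Real.zero_rpow hα]

open Polynomial

lemma C_norm_subdetC_rpow_mul_X_pow_card {N : ℕ} (A : Matrix (Fin N) (Fin N) ℂ) {α : ℝ}
    (hα : α ≠ 0) (I J : Finset (Fin N)) :
    C (‖subdetC A I J‖ ^ α) * X ^ J.card = C (‖subdetC A I J‖ ^ α) * X ^ I.card := by
  by_cases h : I.card = J.card
  · rw [h]
  · simp [norm_subdetC_rpow_of_card_ne A hα h]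

lemma genPoly_eq_sum {N : ℕ} (A : Matrix (Fin N) (Fin N) ℂ) {α : ℝ} (hα : α ≠ 0) :
    genPoly A α = ∑ I, ∑ J, C (‖subdetC A I J‖ ^ α) * X ^ I.card := by
  rw [genPoly, ← sum_fiberwise_of_maps_to (g := Finset.card) (t := range (N + 1))
    fun I _ => mem_range_succ_iff.2 (card_le_univ I |>.trans_eq (Fintype.card_fin N))]
  refine sum_congr rfl fun r _ => ?_
  rw [SpowC, map_sum, sum_mul]
  refine sum_congr rfl fun I hI => ?_
  obtain rfl : I.card = r := (mem_filter.1 hI).2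
  rw [map_sum, sum_mul]
  refine sum_filter_of_ne fun J _ hJ => ?_
  by_contra h
  simp [norm_subdetC_rpow_of_card_ne A hα (Ne.symm h)] at hJ

theorem sum_prod_sum_prod_mul {α β R : Type*} [Fintype α] [Fintype β] [CommSemiring R]
    (f : α → β → R) (g : β → α → R) :
    ∑ p : α × α, ∑ q : β × β, f p.1 q.2 * g q.1 p.2 = (∑ a, ∑ b, f a b) * ∑ b, ∑ a, g b a := by
  simp only [Fintype.sum_prod_type, sum_mul_sum]
  refine sum_congr rfl fun a _ => ?_
  rw [sum_comm]
  exact sum_congr rfl fun _ _ => sum_comm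

/-- **Squaring of the minor generating polynomial under the chiral block map.**
For every real `α > 0`, `F^{(α)}_{J(X)}(t) = (F^{(α)}_X(t))²`. -/
theorem genPoly_Jmat (M : ℕ) (X : Matrix (Fin M) (Fin M) ℂ) :
    ∀ α : ℝ, 0 < α → genPoly (Jmat X) α = (genPoly X α) ^ 2 := by
  intro α hα
  have hα0 := hα.ne'
  calc genPoly (Jmat X) α
      = ∑ p, ∑ q, C (‖subdetC (Jmat X) (finsetPairEquiv M p) (finsetPairEquiv M q)‖ ^ α) *
          Polynomial.X ^ (finsetPairEquiv M p).card := by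
        rw [genPoly_eq_sum _ hα0, ← (finsetPairEquiv M).sum_comp]
        exact sum_congr rfl fun p _ => ((finsetPairEquiv M).sum_comp _).symm
    _ = ∑ p : Finset (Fin M) × Finset (Fin M), ∑ q : Finset (Fin M) × Finset (Fin M),
          (C (‖subdetC X p.1 q.2‖ ^ α) * Polynomial.X ^ p.1.card) *
          (C (‖subdetC X q.1 p.2‖ ^ α) * Polynomial.X ^ q.1.card) := by
        refine sum_congr rfl fun p _ => sum_congr rfl fun q _ => ?_
        rw [← C_norm_subdetC_rpow_mul_X_pow_card X hα0 q.1 p.2, norm_subdetC_Jmat,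
          Real.mul_rpow (norm_nonneg _) (norm_nonneg _), card_finsetPairEquiv, C_mul, pow_add]
        ring
    _ = genPoly X α ^ 2 := by
        rw [sq, genPoly_eq_sum X hα0]
        exact sum_prod_sum_prod_mul (fun I J => C (‖subdetC X I J‖ ^ α) * Polynomial.X ^ I.card)
          (fun I J => C (‖subdetC X I J‖ ^ α) * Polynomial.X ^ I.card)
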